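/- For relatively prime integers 1 < p < q and any integer n ≥ q, every natural number m that is a multiple of p or of q but not of both, with m ≤ pq, gives: the sequence of such multiples in increasing order, indexed from 0, satisfies: the k-th element equals G̃(k,p,q), i.e., G(G̃(k,p,q), p, q) = k+1 and G(G̃(k,p,q) − 1, p, q) = k, where G(n,p,q) = ⌊n/p⌋ + ⌊n/q⌋ − 2⌊n/(pq)⌋ and G̃(k,p,q) = min{n : G(n,p,q) > k}. -/

import Mathlib

/-- `G(n,p,q) = ⌊n/p⌋ + ⌊n/q⌋ − 2⌊n/(pq)⌋`. -/
def Gfun (n p q : ℕ) : ℕ := n / p + n / q - 2 * (n / (p * q))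

/-- `G̃(k,p,q) = min{n : G(n,p,q) > k}`, the generalized inverse of `G` in `n`. -/
noncomputable def Gtilde (k p q : ℕ) : ℕ := sInf {n : ℕ | k < Gfun n p q}

/-! Since `p` and `q` are coprime, `G(m+1) - G(m)` is `1` exactly when `m+1` is a multiple of
one of `p`, `q` but not of `pq`, and `0` otherwise. So `G` climbs through every value in unit
steps, starting from `G(0) = 0` and growing without bound (`G(kpq) = k(p+q-2)`); the least `n`
with `G(n) > k` is therefore a point where `G` steps from `k` to `k+1`. -/

lemma exists_sInf_lt_eq_succ {f : ℕ → ℕ} {k : ℕ} (hstep : ∀ m, f (m + 1) ≤ f m + 1)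
    (h0 : f 0 ≤ k) (hk : ∃ n, k < f n) :
    ∃ n, sInf {n | k < f n} = n + 1 ∧ f n = k ∧ f (n + 1) = k + 1 := by
  have hmem : k < f (sInf {n | k < f n}) := Nat.sInf_mem hk
  obtain ⟨n, hn⟩ : ∃ n, sInf {n | k < f n} = n + 1 :=
    Nat.exists_eq_add_one.mpr (Nat.pos_of_ne_zero fun h => by rw [h] at hmem; omega)
  have hle : f n ≤ k := not_lt.mp (Nat.notMem_of_lt_sInf (s := {n | k < f n}) (by omega))
  rw [hn] at hmem
  have := hstep n
  exact ⟨n, hn, by omega, by omega⟩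

lemma Gfun_zero (p q : ℕ) : Gfun 0 p q = 0 := by
  simp [Gfun]

lemma Gfun_succ {p q : ℕ} (hcop : Nat.Coprime p q) (m : ℕ) :
    Gfun (m + 1) p q = Gfun m p q +
      if (p ∣ m + 1 ∨ q ∣ m + 1) ∧ ¬(p ∣ m + 1 ∧ q ∣ m + 1) then 1 else 0 := by
  have hboth : p ∣ m + 1 ∧ q ∣ m + 1 ↔ p * q ∣ m + 1 :=
    ⟨fun h => hcop.mul_dvd_of_dvd_of_dvd h.1 h.2,
      fun h => ⟨(dvd_mul_right p q).trans h, (dvd_mul_left q p).trans h⟩⟩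
  have hp : m / (p * q) ≤ m / p := by
    rw [← Nat.div_div_eq_div_mul]; exact Nat.div_le_self _ _
  have hq : m / (p * q) ≤ m / q := by
    rw [mul_comm, ← Nat.div_div_eq_div_mul]; exact Nat.div_le_self _ _
  unfold Gfun
  rw [Nat.succ_div (a := m) (b := p), Nat.succ_div (a := m) (b := q),
    Nat.succ_div (a := m) (b := p * q)]
  by_cases hP : p ∣ m + 1 <;> by_cases hQ : q ∣ m + 1 <;>
    simp only [hP, hQ, ← hboth, ↓reduceIte, add_zero, and_self, or_self, and_true, and_false,
      or_true, or_false, not_true_eq_false, not_false_eq_true] <;> omega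

lemma Gfun_succ_le {p q : ℕ} (hcop : Nat.Coprime p q) (m : ℕ) :
    Gfun (m + 1) p q ≤ Gfun m p q + 1 := by
  rw [Gfun_succ hcop]
  split_ifs <;> omega

lemma Gfun_mul_mul {p q : ℕ} (hp : 0 < p) (hq : 0 < q) (k : ℕ) :
    Gfun (k * (p * q)) p q = k * (p + q - 2) := by
  have e1 : k * (p * q) / p = k * q := by
    rw [show k * (p * q) = k * q * p by ring, Nat.mul_div_cancel _ hp]
  have e2 : k * (p * q) / q = k * p := by
    rw [show k * (p * q) = k * p * q by ring, Nat.mul_div_cancel _ hq]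
  rw [Gfun, e1, e2, Nat.mul_div_cancel _ (Nat.mul_pos hp hq), Nat.mul_sub, mul_add]
  ring_nf

/-- For relatively prime `1 < p < q`, the sequence (in increasing order, indexed from `0`)
of natural numbers that are multiples of `p` or of `q` but not of both has as its `k`-th
element exactly `G̃(k,p,q)`: that is, `G̃(k,p,q)` is such a multiple, and
`G(G̃(k,p,q),p,q) = k+1` while `G(G̃(k,p,q) − 1,p,q) = k`. -/
theorem Gtilde_is_kth_multiple (p q k : ℕ) (hp : 1 < p) (hpq : p < q)
    (hcop : Nat.Coprime p q) :
    ((p ∣ Gtilde k p q ∨ q ∣ Gtilde k p q) ∧ ¬(p ∣ Gtilde k p q ∧ q ∣ Gtilde k p q)) ∧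
      Gfun (Gtilde k p q) p q = k + 1 ∧ Gfun (Gtilde k p q - 1) p q = k := by
  have hunbounded : k < Gfun ((k + 1) * (p * q)) p q := by
    rw [Gfun_mul_mul (by omega) (by omega)]
    exact Nat.lt_of_lt_of_le k.lt_succ_self (Nat.le_mul_of_pos_right _ (by omega))
  obtain ⟨n, hn, hGn, hGn1⟩ := exists_sInf_lt_eq_succ (f := (Gfun · p q)) (Gfun_succ_le hcop)
    (by rw [Gfun_zero]; omega) ⟨_, hunbounded⟩
  have hstep := Gfun_succ hcop n
  rw [Gtilde, hn, Nat.add_sub_cancel]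
  refine ⟨?_, hGn1, hGn⟩
  by_contra hnot
  rw [if_neg hnot] at hstep
  omega
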